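/- Let G be a finite Abelian group of order M, R ≥ 1, and define A^{(s)}_{k,r} = (1/√(2M)) |a^{(s)}_{k,r}⟩ ⊗ (Σ_{q ∈ ZMod 2} Σ_{j ∈ G} |b^{(q+s)}_{k⁻¹j,r}⟩⟨ω^{(q)}_{j,r}|), where {|ω^{(q)}_{j,r}⟩} is an orthonormal basis of ℂ^{2MR} and {|a^{(s)}_{k,r}⟩}, {|b^{(s)}_{k,r}⟩} are orthonormal bases of ℂ^{2MR}. Then Σ_{s ∈ ZMod 2} Σ_{k ∈ G} Σ_{r ∈ Fin R} A^{(s)†}_{k,r} A^{(s)}_{k,r} = Id; hence X ↦ Σ_{s,k,r} A^{(s)}_{k,r} X A^{(s)†}_{k,r} is a completely positive trace-preserving map. -/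
import Mathlib


open scoped BigOperators
open Matrix

/-- Index set of `ℂ^{2MR}`: `ZMod 2 × G × Fin R`. -/
abbrev Idx (G : Type*) (R : ℕ) := ZMod 2 × G × Fin R

/-- Orthonormal basis condition (w.r.t. the standard inner product). -/
def IsONB {ι : Type*} [Fintype ι] [DecidableEq ι] (a : ι → ι → ℂ) : Prop :=
  ∀ j k, star (a j) ⬝ᵥ a k = if j = k then 1 else 0

/-- The Kraus operator
`A^{(s)}_{k,r} = (1/√(2M)) |a^{(s)}_{k,r}⟩ ⊗ (Σ_{q,j} |b^{(q+s)}_{k⁻¹j,r}⟩⟨ω^{(q)}_{j,r}|)`,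
as an operator from `ℂ^{2MR}` to `ℂ^{2MR} ⊗ ℂ^{2MR}`. -/
noncomputable def kraus {G : Type*} [CommGroup G] [Fintype G] {R : ℕ}
    (a b ω : Idx G R → Idx G R → ℂ) (s : ZMod 2) (k : G) (r : Fin R) :
    Matrix (Idx G R × Idx G R) (Idx G R) ℂ :=
  Matrix.of fun x y =>
    ((Real.sqrt (2 * Fintype.card G) : ℂ))⁻¹ *
      (a (s, k, r) x.1 *
        ∑ q : ZMod 2, ∑ j : G, b (q + s, k⁻¹ * j, r) x.2 * (starRingEnd ℂ) (ω (q, j, r) y))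

lemma onb_diag {ι : Type*} [Fintype ι] [DecidableEq ι] {w : ι → ι → ℂ}
    (hw : IsONB w) (i i' : ι) :
    ∑ x, (starRingEnd ℂ) (w i x) * w i' x = if i = i' then 1 else 0 := by
  simpa [dotProduct] using hw i i'

lemma onb_col {ι : Type*} [Fintype ι] [DecidableEq ι] {w : ι → ι → ℂ}
    (hw : IsONB w) (y y' : ι) :
    ∑ i, w i y * (starRingEnd ℂ) (w i y') = if y = y' then 1 else 0 := by
  have h1 : (Matrix.of w) * (Matrix.of w)ᴴ = 1 := by
    ext j k
    have := congrArg (starRingEnd ℂ) (onb_diag hw j k)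
    simpa [Matrix.mul_apply, Matrix.one_apply, map_sum, mul_comm, apply_ite,
      eq_comm] using this
  have h2 := mul_eq_one_comm.mp h1
  have h3 : ((Matrix.of w)ᴴ * Matrix.of w) y' y = (1 : Matrix ι ι ℂ) y' y := by rw [h2]
  simpa [Matrix.mul_apply, Matrix.one_apply, mul_comm, eq_comm] using h3


lemma key {G : Type*} [CommGroup G] [Fintype G] [DecidableEq G] {R : ℕ}
    (a b ω : Idx G R → Idx G R → ℂ) (ha : IsONB a) (hb : IsONB b)
    (s : ZMod 2) (k : G) (r : Fin R) (y y' : Idx G R) :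
    ((kraus a b ω s k r)ᴴ * kraus a b ω s k r) y y'
      = ((2 * (Fintype.card G : ℂ)))⁻¹ *
          ∑ q : ZMod 2, ∑ j : G, ω (q, j, r) y * (starRingEnd ℂ) (ω (q, j, r) y') := by
  have hM : (0:ℝ) ≤ 2 * (Fintype.card G : ℝ) := by positivity
  have hC : star ((Real.sqrt (2 * Fintype.card G) : ℂ))⁻¹ *
      ((Real.sqrt (2 * Fintype.card G) : ℂ))⁻¹ = (2 * (Fintype.card G : ℂ))⁻¹ := by
    have h1 : (Real.sqrt (2 * Fintype.card G) : ℂ) * (Real.sqrt (2 * Fintype.card G)) =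
        2 * (Fintype.card G : ℂ) := by
      rw [← Complex.ofReal_mul, Real.mul_self_sqrt hM]
      push_cast; ring
    rw [star_inv₀, ← mul_inv, Complex.star_def, Complex.conj_ofReal, h1]
  set c : ℂ := ((Real.sqrt (2 * Fintype.card G) : ℂ))⁻¹ with hc
  rw [Matrix.mul_apply]
  simp only [Matrix.conjTranspose_apply, kraus, Matrix.of_apply]
  rw [Fintype.sum_prod_type]
  calc (∑ x : Idx G R, ∑ x2 : Idx G R,
        star (c * (a (s, k, r) x *
          ∑ q : ZMod 2, ∑ j : G, b (q + s, k⁻¹ * j, r) x2 * (starRingEnd ℂ) (ω (q, j, r) y))) *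
        (c * (a (s, k, r) x *
          ∑ q : ZMod 2, ∑ j : G, b (q + s, k⁻¹ * j, r) x2 * (starRingEnd ℂ) (ω (q, j, r) y'))))
      = (∑ x : Idx G R, (star c * c) * (star (a (s, k, r) x) * a (s, k, r) x)) *
        (∑ x2 : Idx G R,
          (∑ p : ZMod 2 × G, star (b (p.1 + s, k⁻¹ * p.2, r) x2) * ω (p.1, p.2, r) y) *
          (∑ p : ZMod 2 × G, b (p.1 + s, k⁻¹ * p.2, r) x2 * (starRingEnd ℂ) (ω (p.1, p.2, r) y'))) := by
        rw [Finset.sum_mul_sum]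
        refine Finset.sum_congr rfl fun x _ => Finset.sum_congr rfl fun x2 _ => ?_
        rw [Fintype.sum_prod_type, Fintype.sum_prod_type]
        simp only [star_sum, star_mul', Complex.star_def, Complex.conj_conj]
        ring
    _ = (star c * c) *
        (∑ x2 : Idx G R, ∑ p : ZMod 2 × G, ∑ p' : ZMod 2 × G,
          (star (b (p.1 + s, k⁻¹ * p.2, r) x2) * b (p'.1 + s, k⁻¹ * p'.2, r) x2) *
          (ω (p.1, p.2, r) y * (starRingEnd ℂ) (ω (p'.1, p'.2, r) y'))) := by
        have h1 : (∑ x : Idx G R, (star c * c) * (star (a (s, k, r) x) * a (s, k, r) x))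
            = star c * c := by
          rw [← Finset.mul_sum]
          have := onb_diag ha (s, k, r) (s, k, r)
          simp only [Complex.star_def] at this ⊢
          rw [this]
          simp
        rw [h1]
        congr 1
        refine Finset.sum_congr rfl fun x2 _ => ?_
        rw [Finset.sum_mul_sum]
        refine Finset.sum_congr rfl fun p _ => Finset.sum_congr rfl fun p' _ => ?_
        ring
    _ = (star c * c) *
        (∑ p : ZMod 2 × G, ∑ p' : ZMod 2 × G,
          (if p = p' then (1:ℂ) else 0) *
          (ω (p.1, p.2, r) y * (starRingEnd ℂ) (ω (p'.1, p'.2, r) y'))) := by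
        congr 1
        rw [Finset.sum_comm]
        refine Finset.sum_congr rfl fun p _ => ?_
        rw [Finset.sum_comm]
        refine Finset.sum_congr rfl fun p' _ => ?_
        rw [← Finset.sum_mul]
        congr 1
        have := onb_diag hb (p.1 + s, k⁻¹ * p.2, r) (p'.1 + s, k⁻¹ * p'.2, r)
        simp only [Complex.star_def] at this ⊢
        rw [this]
        simp [Prod.ext_iff]
    _ = ((2 * (Fintype.card G : ℂ)))⁻¹ *
          ∑ q : ZMod 2, ∑ j : G, ω (q, j, r) y * (starRingEnd ℂ) (ω (q, j, r) y') := by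
        rw [hC]
        congr 1
        simp only [ite_mul, one_mul, zero_mul, Finset.sum_ite_eq, Finset.mem_univ, if_true]
        rw [Fintype.sum_prod_type]

/-- `Σ_{s,k,r} A^{(s)†}_{k,r} A^{(s)}_{k,r} = Id`; hence
`X ↦ Σ_{s,k,r} A^{(s)}_{k,r} X A^{(s)†}_{k,r}` is trace preserving (a CPTP map). -/
theorem kraus_sum_eq_id {G : Type*} [CommGroup G] [Fintype G] [DecidableEq G]
    {R : ℕ} (hR : 1 ≤ R)
    (a b ω : Idx G R → Idx G R → ℂ) (ha : IsONB a) (hb : IsONB b) (hω : IsONB ω) :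
    (∑ s : ZMod 2, ∑ k : G, ∑ r : Fin R,
        (kraus a b ω s k r)ᴴ * kraus a b ω s k r = (1 : Matrix (Idx G R) (Idx G R) ℂ)) ∧
    ∀ X : Matrix (Idx G R) (Idx G R) ℂ,
      (∑ s : ZMod 2, ∑ k : G, ∑ r : Fin R,
          kraus a b ω s k r * X * (kraus a b ω s k r)ᴴ).trace = X.trace := by
  have hMne : ((Fintype.card G : ℂ)) ≠ 0 := Nat.cast_ne_zero.mpr Fintype.card_ne_zero
  have key1 : (∑ s : ZMod 2, ∑ k : G, ∑ r : Fin R,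
        (kraus a b ω s k r)ᴴ * kraus a b ω s k r) = (1 : Matrix (Idx G R) (Idx G R) ℂ) := by
    ext y y'
    simp only [Matrix.sum_apply]
    have hres : ∑ q : ZMod 2, ∑ j : G, ∑ r : Fin R,
        ω (q, j, r) y * (starRingEnd ℂ) (ω (q, j, r) y') = if y = y' then 1 else 0 := by
      have h := onb_col hω y y'
      simp only [Fintype.sum_prod_type] at h
      exact h
    calc ∑ s : ZMod 2, ∑ k : G, ∑ r : Fin R, ((kraus a b ω s k r)ᴴ * kraus a b ω s k r) y y'
        = ∑ s : ZMod 2, ∑ k : G, ∑ r : Fin R, ((2 * (Fintype.card G : ℂ)))⁻¹ *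
            ∑ q : ZMod 2, ∑ j : G, ω (q, j, r) y * (starRingEnd ℂ) (ω (q, j, r) y') :=
          Finset.sum_congr rfl fun s _ => Finset.sum_congr rfl fun k _ =>
            Finset.sum_congr rfl fun r _ => key a b ω ha hb s k r y y'
      _ = (2 : ℂ) * (Fintype.card G : ℂ) * (((2 * (Fintype.card G : ℂ)))⁻¹ *
            ∑ r : Fin R, ∑ q : ZMod 2, ∑ j : G, ω (q, j, r) y * (starRingEnd ℂ) (ω (q, j, r) y')) := by
          simp only [← Finset.mul_sum, Finset.sum_const, Finset.card_univ, nsmul_eq_mul]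
          rw [ZMod.card]
          push_cast
          ring
      _ = ∑ r : Fin R, ∑ q : ZMod 2, ∑ j : G, ω (q, j, r) y * (starRingEnd ℂ) (ω (q, j, r) y') := by
          rw [mul_inv, ← mul_assoc]
          field_simp
      _ = if y = y' then 1 else 0 := by
          rw [Finset.sum_comm, ← hres]
          exact Finset.sum_congr rfl fun q _ => Finset.sum_comm
      _ = (1 : Matrix (Idx G R) (Idx G R) ℂ) y y' := by simp [Matrix.one_apply]
  refine ⟨key1, fun X => ?_⟩
  calc (∑ s : ZMod 2, ∑ k : G, ∑ r : Fin R,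
          kraus a b ω s k r * X * (kraus a b ω s k r)ᴴ).trace
      = ∑ s : ZMod 2, ∑ k : G, ∑ r : Fin R,
          ((kraus a b ω s k r)ᴴ * kraus a b ω s k r * X).trace := by
        simp only [Matrix.trace_sum]
        refine Finset.sum_congr rfl fun s _ => Finset.sum_congr rfl fun k _ =>
          Finset.sum_congr rfl fun r _ => ?_
        rw [Matrix.trace_mul_cycle]
    _ = ((∑ s : ZMod 2, ∑ k : G, ∑ r : Fin R,
          (kraus a b ω s k r)ᴴ * kraus a b ω s k r) * X).trace := by
        simp only [Finset.sum_mul, Matrix.trace_sum]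
    _ = X.trace := by rw [key1, Matrix.one_mul]
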